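/- Let (X, d) be a derivative space and let N_d(x) := {U ⊆ X | x ∉ d (Uᶜ)} denote the family of d-neighborhoods of x. Then for every x ∈ X: (1) the whole space X belongs to N_d(x); (2) if U ∈ N_d(x) and U ⊆ V then V ∈ N_d(x); (3) if U ∈ N_d(x) and V ∈ N_d(x) then U ∩ V ∈ N_d(x); (4) if x ∈ U and U ∈ N_d(x), then {y | U ∈ N_d(y)} ∈ N_d(x). -/

import Mathlib

/-! The neighborhood axioms are the duals, under `U ↦ Uᶜ`, of the derivative-space axioms:
`d ∅ = ∅` gives (1), additivity of `d` gives monotonicity and hence (2) and (3), and the weak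
transitivity `d (d A) ⊆ A ∪ d A` gives (4), since the complement of `{y | U ∈ N_d(y)}` is
exactly `d Uᶜ`. -/

namespace DerivativeSpace

variable {X : Type*} {d : Set X → Set X}

theorem monotone_of_map_union (hunion : ∀ A B : Set X, d (A ∪ B) = d A ∪ d B) : Monotone d :=
  fun A B hAB => by
    rw [← Set.union_eq_self_of_subset_left hAB, hunion]
    exact Set.subset_union_left

theorem notMem_map_compl_inter (hunion : ∀ A B : Set X, d (A ∪ B) = d A ∪ d B) {x : X}
    {U V : Set X} (hU : x ∉ d Uᶜ) (hV : x ∉ d Vᶜ) : x ∉ d (U ∩ V)ᶜ := by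
  rw [Set.compl_inter, hunion]
  exact not_or_intro hU hV

theorem notMem_map_map_compl (hweak : ∀ A : Set X, d (d A) ⊆ A ∪ d A) {x : X} {U : Set X}
    (hxU : x ∈ U) (hU : x ∉ d Uᶜ) : x ∉ d (d Uᶜ) :=
  fun hx => (hweak Uᶜ hx).elim (· hxU) hU

end DerivativeSpace

open DerivativeSpace in
theorem dneighborhoods_form_neighborhood_derivative_space {X : Type*} (d : Set X → Set X)
    (hempty : d ∅ = ∅)
    (hunion : ∀ A B : Set X, d (A ∪ B) = d A ∪ d B)
    (hweak : ∀ A : Set X, d (d A) ⊆ A ∪ d A) :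
    ∀ x : X,
      (x ∉ d (Set.univ : Set X)ᶜ) ∧
      (∀ U V : Set X, x ∉ d Uᶜ → U ⊆ V → x ∉ d Vᶜ) ∧
      (∀ U V : Set X, x ∉ d Uᶜ → x ∉ d Vᶜ → x ∉ d (U ∩ V)ᶜ) ∧
      (∀ U : Set X, x ∈ U → x ∉ d Uᶜ → x ∉ d ({y | y ∉ d Uᶜ} : Set X)ᶜ) := by
  intro x
  refine ⟨?_, ?_, fun U V => notMem_map_compl_inter hunion, ?_⟩
  · rw [Set.compl_univ, hempty]
    exact Set.notMem_empty x
  · exact fun U V hU hUV hV =>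
      hU (monotone_of_map_union hunion (Set.compl_subset_compl.mpr hUV) hV)
  · intro U hxU hU
    change x ∉ d (d Uᶜ)ᶜᶜ
    rw [compl_compl]
    exact notMem_map_map_compl hweak hxU hU
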